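/- arXiv:math/0209059 — 7 statements merged into one kernel-verified Lean document; each statement's English description precedes it below -/
import Mathlib

section
/- Let X be a vector space over a field F and let A, B : X → X be linear operators each of rank at least 2. If for every x ∈ X the vectors Ax and Bx are linearly dependent, then A and B are linearly dependent operators. -/
/-!
Pointwise dependence with `A x ≠ 0` puts `B x` on the line `F ∙ A x`. If some `x ∈ ker A` had
`B x ≠ 0`, comparing `x + y` with `y` would put every `A y` on the line `F ∙ B x`, against
`rank (range A) ≥ 2`; so `ker A ≤ ker B` and `B x ∈ F ∙ A x` for all `x`. Then `B` factors
through `range A` as `B = T ∘ A` for an endomorphism `T` of `range A` with `T v ∈ F ∙ v` for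
every `v`, and such a `T` is a homothety `c • id`, whence `B = c • A`.
-/

open Module Submodule LinearMap

section

variable {F X Y : Type*} [Field F] [AddCommGroup X] [Module F X] [AddCommGroup Y] [Module F Y]

theorem rank_le_one_of_le_span_singleton {p : Submodule F Y} {w : Y} (h : p ≤ F ∙ w) :
    Module.rank F p ≤ 1 :=
  (Submodule.rank_mono h).trans (by simpa using rank_span_le ({w} : Set Y))

theorem mem_span_singleton_of_not_linearIndependent_pair {u v : Y}
    (h : ¬ LinearIndependent F ![u, v]) (hu : u ≠ 0) : v ∈ F ∙ u := by
  rw [LinearIndependent.pair_iff' hu] at h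
  push Not at h
  exact mem_span_singleton.mpr h

theorem not_linearIndependent_pair_of_mem_span_singleton {u v : Y} (h : v ∈ F ∙ u) :
    ¬ LinearIndependent F ![u, v] := by
  obtain ⟨a, rfl⟩ := mem_span_singleton.mp h
  intro hli
  have := (LinearIndependent.pair_iff.mp hli a (-1) (by simp)).2
  exact neg_ne_zero.mpr one_ne_zero this

namespace LinearMap

theorem ker_le_ker_of_forall_not_linearIndependent {A B : X →ₗ[F] Y}
    (hA : 2 ≤ Module.rank F (range A)) (h : ∀ x, ¬ LinearIndependent F ![A x, B x]) :
    ker A ≤ ker B := by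
  intro x hx
  rw [mem_ker] at hx ⊢
  by_contra hBx
  suffices range A ≤ F ∙ B x from
    absurd (hA.trans (rank_le_one_of_le_span_singleton this)) (by norm_num)
  rintro _ ⟨y, rfl⟩
  by_cases hy : A y = 0
  · simp [hy]
  have hBy := mem_span_singleton_of_not_linearIndependent_pair (h y) hy
  have hBxy := mem_span_singleton_of_not_linearIndependent_pair (h (x + y)) (by simpa [hx])
  rw [map_add, map_add, hx, zero_add] at hBxy
  obtain ⟨c, hc⟩ := mem_span_singleton.mp (by simpa using sub_mem hBxy hBy)
  have hc0 : c ≠ 0 := by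
    rintro rfl
    exact hBx (by simpa using hc.symm)
  rw [← hc, span_singleton_smul_eq hc0.isUnit]
  exact mem_span_singleton_self _

theorem forall_apply_mem_span_singleton_of_ker_le {A B : X →ₗ[F] Y} (hker : ker A ≤ ker B)
    (h : ∀ x, ¬ LinearIndependent F ![A x, B x]) (x : X) : B x ∈ F ∙ A x := by
  by_cases hx : A x = 0
  · simp [show B x = 0 from hker hx]
  · exact mem_span_singleton_of_not_linearIndependent_pair (h x) hx

theorem exists_eq_smul_of_forall_apply_mem_span_singleton {A B : X →ₗ[F] Y}
    (h : ∀ x, B x ∈ F ∙ A x) : ∃ c : F, B = c • A := by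
  obtain ⟨S, hS⟩ := A.rangeRestrict.exists_rightInverse_of_surjective A.range_rangeRestrict
  have hAS (v : range A) : A (S v) = v := congrArg Subtype.val (LinearMap.congr_fun hS v)
  have hBS (v : range A) : B (S v) ∈ F ∙ (v : Y) := hAS v ▸ h (S v)
  -- `S (A x) - x` lies in `ker A`, which `h` sends into `F ∙ 0 = ⊥`.
  have hBSA (x : X) : B (S (A.rangeRestrict x)) = B x := by
    have hmem := h (S (A.rangeRestrict x) - x)
    rw [map_sub, hAS, codRestrict_apply, sub_self, span_singleton_eq_bot.mpr rfl, mem_bot,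
      map_sub, sub_eq_zero] at hmem
    exact hmem
  let T : range A →ₗ[F] range A := (B ∘ₗ S).codRestrict (range A) fun v =>
    span_singleton_le_iff_mem _ _ |>.mpr v.2 (hBS v)
  obtain ⟨c, hc⟩ := T.exists_eq_smul_id_of_forall_notLinearIndependent fun v => by
    refine not_linearIndependent_pair_of_mem_span_singleton ?_
    obtain ⟨a, ha⟩ := mem_span_singleton.mp (hBS v)
    exact mem_span_singleton.mpr ⟨a, Subtype.ext ha⟩
  refine ⟨c, LinearMap.ext fun x => ?_⟩
  have := congrArg Subtype.val (LinearMap.congr_fun hc (A.rangeRestrict x))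
  simpa [T, hBSA] using this

end LinearMap

end

theorem stmt_0_general {F X : Type*} [Field F] [AddCommGroup X] [Module F X]
    (A B : X →ₗ[F] X)
    (hA : 2 ≤ Module.rank F (LinearMap.range A))
    (h : ∀ x : X, ¬ LinearIndependent F ![A x, B x]) :
    ¬ LinearIndependent F ![A, B] := by
  have hker := ker_le_ker_of_forall_not_linearIndependent hA h
  obtain ⟨c, rfl⟩ := exists_eq_smul_of_forall_apply_mem_span_singleton
    (forall_apply_mem_span_singleton_of_ker_le hker h)
  exact not_linearIndependent_pair_of_mem_span_singleton (smul_mem _ c (mem_span_singleton_self A))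

theorem stmt_0 {F X : Type*} [Field F] [AddCommGroup X] [Module F X]
    (A B : X →ₗ[F] X)
    (hA : 2 ≤ Module.rank F (LinearMap.range A))
    (hB : 2 ≤ Module.rank F (LinearMap.range B))
    (h : ∀ x : X, ¬ LinearIndependent F ![A x, B x]) :
    ¬ LinearIndependent F ![A, B] :=
  stmt_0_general A B hA h
end

section
/- Let F be a field and φ : Mₙ(F) → Mₙ(F) a map (no linearity assumed) satisfying tr(φ(A)φ(B)) = tr(AB) for all A, B ∈ Mₙ(F). Then φ is linear (additive and homogeneous) and bijective. -/
/-!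
If `φ` preserves a left-separating bilinear form `B`, then `φ` maps linearly independent families
to linearly independent ones (apply `B · (φ y)` to a vanishing combination), so in finite dimension
the range of `φ` spans the space. The defect `φ (x + y) - φ x - φ y` (and likewise for scalars) is
`B`-orthogonal to that range, hence zero; so `φ` is linear, injective by separation, and therefore
bijective. For matrices, `B` is the trace form `tr (A * B)`.
-/

namespace LinearMap.BilinForm

variable {K V : Type*} [Field K] [AddCommGroup V] [Module K V]
  {B : LinearMap.BilinForm K V} {φ : V → V}

theorem linearIndependent_comp_of_preserves (hB : B.SeparatingLeft)
    (hφ : ∀ x y, B (φ x) (φ y) = B x y) {ι : Type*} {v : ι → V}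
    (hv : LinearIndependent K v) : LinearIndependent K (φ ∘ v) := by
  rw [linearIndependent_iff'] at hv ⊢
  intro s g hg i hi
  refine hv s g (hB _ fun y => ?_) i hi
  simpa [map_sum, hφ] using congrArg (B · (φ y)) hg

theorem span_range_eq_top_of_preserves [FiniteDimensional K V] (hB : B.SeparatingLeft)
    (hφ : ∀ x y, B (φ x) (φ y) = B x y) : Submodule.span K (Set.range φ) = ⊤ := by
  let b := Module.finBasis K V
  have hspan : Submodule.span K (Set.range (φ ∘ b)) = ⊤ :=
    (linearIndependent_comp_of_preserves hB hφ b.linearIndependent).span_eq_top_of_card_eq_finrank'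
      (by simp)
  exact top_le_iff.mp (hspan ▸ Submodule.span_mono (Set.range_comp_subset_range b φ))

theorem eq_zero_of_forall_apply_map_eq_zero [FiniteDimensional K V] (hB : B.SeparatingLeft)
    (hφ : ∀ x y, B (φ x) (φ y) = B x y) {d : V} (hd : ∀ y, B d (φ y) = 0) : d = 0 := by
  have hker : Submodule.span K (Set.range φ) ≤ LinearMap.ker (B d) :=
    Submodule.span_le.mpr (Set.range_subset_iff.mpr hd)
  rw [span_range_eq_top_of_preserves hB hφ, top_le_iff, LinearMap.ker_eq_top] at hker
  exact hB d (LinearMap.congr_fun hker)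

theorem map_add_of_preserves [FiniteDimensional K V] (hB : B.SeparatingLeft)
    (hφ : ∀ x y, B (φ x) (φ y) = B x y) (x y : V) : φ (x + y) = φ x + φ y :=
  sub_eq_zero.mp <| eq_zero_of_forall_apply_map_eq_zero hB hφ fun z => by
    simp [hφ]

theorem map_smul_of_preserves [FiniteDimensional K V] (hB : B.SeparatingLeft)
    (hφ : ∀ x y, B (φ x) (φ y) = B x y) (c : K) (x : V) : φ (c • x) = c • φ x :=
  sub_eq_zero.mp <| eq_zero_of_forall_apply_map_eq_zero hB hφ fun z => by
    simp [hφ]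

theorem injective_of_preserves (hB : B.SeparatingLeft)
    (hφ : ∀ x y, B (φ x) (φ y) = B x y) : Function.Injective φ := fun x y hxy =>
  sub_eq_zero.mp <| hB _ fun z => by
    rw [map_sub, LinearMap.sub_apply, ← hφ x, ← hφ y, hxy, sub_self]

def linearMapOfPreserves [FiniteDimensional K V] (hB : B.SeparatingLeft)
    (hφ : ∀ x y, B (φ x) (φ y) = B x y) : V →ₗ[K] V where
  toFun := φ
  map_add' := map_add_of_preserves hB hφ
  map_smul' := map_smul_of_preserves hB hφ

theorem bijective_of_preserves [FiniteDimensional K V] (hB : B.SeparatingLeft)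
    (hφ : ∀ x y, B (φ x) (φ y) = B x y) : Function.Bijective φ :=
  have hinj := injective_of_preserves hB hφ
  ⟨hinj, (linearMapOfPreserves hB hφ).surjective_of_injective hinj⟩

end LinearMap.BilinForm

namespace Matrix

variable {F n : Type*} [Field F] [Fintype n]

def traceMulForm : LinearMap.BilinForm F (Matrix n n F) :=
  (LinearMap.mul F (Matrix n n F)).compr₂ (traceLinearMap n F F)

@[simp]
theorem traceMulForm_apply (A B : Matrix n n F) : traceMulForm A B = (A * B).trace := rfl

theorem traceMulForm_separatingLeft :
    (traceMulForm : LinearMap.BilinForm F (Matrix n n F)).SeparatingLeft :=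
  fun A hA => ext_iff_trace_mul_right.mpr fun X => by simpa using hA X

end Matrix

theorem stmt_3 {F : Type*} [Field F] (n : ℕ)
    (φ : Matrix (Fin n) (Fin n) F → Matrix (Fin n) (Fin n) F)
    (h : ∀ A B : Matrix (Fin n) (Fin n) F, (φ A * φ B).trace = (A * B).trace) :
    (∀ A B : Matrix (Fin n) (Fin n) F, φ (A + B) = φ A + φ B) ∧
    (∀ (c : F) (A : Matrix (Fin n) (Fin n) F), φ (c • A) = c • φ A) ∧
    Function.Bijective φ := by
  have hB := Matrix.traceMulForm_separatingLeft (F := F) (n := Fin n)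
  have hφ : ∀ A B, Matrix.traceMulForm (φ A) (φ B) = Matrix.traceMulForm A B := h
  exact ⟨LinearMap.BilinForm.map_add_of_preserves hB hφ,
    LinearMap.BilinForm.map_smul_of_preserves hB hφ,
    LinearMap.BilinForm.bijective_of_preserves hB hφ⟩
end

section
/- Every 2-local automorphism of Mₙ(ℝ) is an automorphism. -/
/-!
Automorphisms of `Mₙ(K)` preserve the trace, so a 2-local automorphism `φ` satisfies
`tr (φ A * φ B) = tr (A * B)`. A map preserving a nondegenerate bilinear form on a
finite-dimensional space has spanning image, and is therefore linear and injective. Applying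
2-locality to the pairs `(X, X * X)`, `(X, Y)` with `X * Y = 0` and `(1, 1)` shows that `φ`
preserves squares, zero products and `1`; for a linear map on `Mₙ(K)` this forces
`φ (E i j) * φ (E k l) = φ (E i j * E k l)` on matrix units, hence multiplicativity.
-/

open Matrix

namespace LinearMap.SeparatingLeft

variable {K V : Type*} [Field K] [AddCommGroup V] [Module K V] [FiniteDimensional K V]
  {B : V →ₗ[K] V →ₗ[K] K} {f : V → V}

theorem span_range_eq_top_of_isometry (hB : B.SeparatingLeft)
    (hf : ∀ x y, B (f x) (f y) = B x y) : Submodule.span K (Set.range f) = ⊤ := by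
  let b := Module.finBasis K V
  have hli : LinearIndependent K (f ∘ b) := by
    rw [Fintype.linearIndependent_iff]
    intro c hc
    have hcomb : ∑ i, c i • b i = 0 := by
      have hB0 : B (∑ i, c i • b i) = 0 := b.ext fun j => by
        simpa [hf] using congr(B $hc (f (b j)))
      exact hB _ fun y => congr($hB0 y)
    exact Fintype.linearIndependent_iff.mp b.linearIndependent c hcomb
  refine eq_top_iff.mpr <| (hli.span_eq_top_of_card_eq_finrank' (by simp)).ge.trans ?_
  exact Submodule.span_mono (Set.range_comp_subset_range b f)

theorem eq_zero_of_isometry_of_forall_apply_map_eq_zero (hB : B.SeparatingLeft)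
    (hf : ∀ x y, B (f x) (f y) = B x y) {u : V} (hu : ∀ z, B u (f z) = 0) : u = 0 :=
  hB u fun y => congr($(ext_on_range (span_range_eq_top_of_isometry hB hf)
    (f := B u) (g := 0) hu) y)

theorem exists_linearEquiv_eq_of_isometry (hB : B.SeparatingLeft)
    (hf : ∀ x y, B (f x) (f y) = B x y) : ∃ e : V ≃ₗ[K] V, ⇑e = f := by
  have hadd (x y : V) : f (x + y) = f x + f y :=
    sub_eq_zero.mp <| eq_zero_of_isometry_of_forall_apply_map_eq_zero hB hf fun z => by
      simp [hf]
  have hsmul (c : K) (x : V) : f (c • x) = c • f x :=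
    sub_eq_zero.mp <| eq_zero_of_isometry_of_forall_apply_map_eq_zero hB hf fun z => by
      simp [hf]
  let g : V →ₗ[K] V := ⟨⟨f, hadd⟩, hsmul⟩
  have hg : Function.Injective g := fun x y hxy =>
    sub_eq_zero.mp <| hB _ fun z => by
      rw [map_sub, sub_apply, ← hf x, ← hf y]
      exact sub_eq_zero.mpr congr(B $hxy (f z))
  exact ⟨.ofInjectiveEndo g hg, rfl⟩

end LinearMap.SeparatingLeft

namespace Matrix

variable {n K R : Type*} [Fintype n] [DecidableEq n] [CommRing K]

variable (K) in
def traceForm : Matrix n n K →ₗ[K] Matrix n n K →ₗ[K] K :=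
  (LinearMap.mul K (Matrix n n K)).compr₂ (traceLinearMap n K K)

@[simp]
theorem traceForm_apply (A B : Matrix n n K) : traceForm K A B = (A * B).trace :=
  rfl

theorem traceForm_separatingLeft : (traceForm K : Matrix n n K →ₗ[K] _).SeparatingLeft :=
  fun A hA => ext_iff_trace_mul_right.mpr fun X => by simpa using hA X

variable [Ring R] [Algebra K R]

theorem map_single_mul_single_of_map_mul_self_of_map_mul_eq_zero
    (f : Matrix n n K →ₗ[K] R) (hsq : ∀ X, f (X * X) = f X * f X)
    (hzero : ∀ X Y, X * Y = 0 → f X * f Y = 0) (i j k l : n) :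
    f (single i j 1) * f (single k l 1) = f (single i j 1 * single k l 1) := by
  have jordan (X Y : Matrix n n K) : f X * f Y + f Y * f X = f (X * Y + Y * X) :=
    calc f X * f Y + f Y * f X = f ((X + Y) * (X + Y)) - f (X * X) - f (Y * Y) := by
          rw [hsq, hsq, hsq, map_add]; noncomm_ring
      _ = f (X * Y + Y * X) := by rw [← map_sub, ← map_sub]; congr 1; noncomm_ring
  have hzero' {i j k l : n} (h : j ≠ k) : f (single i j (1 : K)) * f (single k l 1) = 0 :=
    hzero _ _ (single_mul_single_of_ne _ _ _ _ h _)
  have hchain {i j l : n} (h : i ≠ l) :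
      f (single i j (1 : K)) * f (single j l 1) = f (single i l 1) := by
    simpa [hzero' h.symm, single_mul_single_of_ne _ _ _ _ h.symm] using
      jordan (single i j 1) (single j l 1)
  rcases eq_or_ne j k with rfl | hjk
  · rw [single_mul_single_same, one_mul]
    rcases eq_or_ne i l with rfl | hil
    · rcases eq_or_ne i j with rfl | hij
      · rw [← hsq, single_mul_single_same, one_mul]
      · -- `E i j * E j i + E j i * E i j = E i i + E j j`; multiply on the left by `f (E i i)`.
        have h := congr(f (single i i 1) * $(jordan (single i j (1 : K)) (single j i 1)))
        simp only [single_mul_single_same, one_mul, map_add, mul_add, ← mul_assoc,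
          hchain hij, hzero' hij, zero_mul, add_zero, ← hsq] at h
        simpa [hzero' hij.symm] using h
    · exact hchain hil
  · rw [hzero' hjk, single_mul_single_of_ne _ _ _ _ hjk, map_zero]

theorem map_mul_of_map_mul_self_of_map_mul_eq_zero
    (f : Matrix n n K →ₗ[K] R) (hsq : ∀ X, f (X * X) = f X * f X)
    (hzero : ∀ X Y, X * Y = 0 → f X * f Y = 0) (A B : Matrix n n K) :
    f (A * B) = f A * f B := by
  have hsingle (i j : n) (a : K) : single i j a = a • single i j 1 := by
    rw [smul_single, smul_eq_mul, mul_one]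
  induction A using Matrix.induction_on' generalizing B with
  | h_zero => simp
  | h_add A₁ A₂ h₁ h₂ => rw [add_mul, map_add, map_add, add_mul, h₁, h₂]
  | h_std_basis i j a =>
  induction B using Matrix.induction_on' with
  | h_zero => simp
  | h_add B₁ B₂ h₁ h₂ => rw [mul_add, map_add, map_add, mul_add, h₁, h₂]
  | h_std_basis k l b =>
    rw [hsingle i j, hsingle k l, smul_mul_smul_comm, map_smul, map_smul, map_smul,
      smul_mul_smul_comm, map_single_mul_single_of_map_mul_self_of_map_mul_eq_zero f hsq hzero]

end Matrix

theorem stmt_9 (n : ℕ)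
    (φ : Matrix (Fin n) (Fin n) ℝ → Matrix (Fin n) (Fin n) ℝ)
    (h2loc : ∀ A B : Matrix (Fin n) (Fin n) ℝ,
      ∃ ψ : Matrix (Fin n) (Fin n) ℝ ≃ₐ[ℝ] Matrix (Fin n) (Fin n) ℝ,
        φ A = ψ A ∧ φ B = ψ B) :
    ∃ ψ : Matrix (Fin n) (Fin n) ℝ ≃ₐ[ℝ] Matrix (Fin n) (Fin n) ℝ,
      ∀ A, φ A = ψ A := by
  have htrace (A B : Matrix (Fin n) (Fin n) ℝ) :
      traceForm ℝ (φ A) (φ B) = traceForm ℝ A B := by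
    obtain ⟨ψ, hA, hB⟩ := h2loc A B
    rw [traceForm_apply, traceForm_apply, hA, hB, ← map_mul, trace_map]
  obtain ⟨e, rfl⟩ :=
    LinearMap.SeparatingLeft.exists_linearEquiv_eq_of_isometry traceForm_separatingLeft htrace
  have hsq (X : Matrix (Fin n) (Fin n) ℝ) : e (X * X) = e X * e X := by
    obtain ⟨ψ, hX, hXX⟩ := h2loc X (X * X)
    rw [hX, hXX, map_mul]
  have hzero (X Y : Matrix (Fin n) (Fin n) ℝ) (h : X * Y = 0) : e X * e Y = 0 := by
    obtain ⟨ψ, hX, hY⟩ := h2loc X Y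
    rw [hX, hY, ← map_mul, h, map_zero]
  have hone : e 1 = 1 := by
    obtain ⟨ψ, h1, -⟩ := h2loc 1 1
    rw [h1, map_one]
  exact ⟨.ofLinearEquiv e hone
    (map_mul_of_map_mul_self_of_map_mul_eq_zero e.toLinearMap hsq hzero), fun _ => rfl⟩
end

section
/- Let φ be a 2-local automorphism of Mₙ(F). If φ(A) = T Aᵗ T⁻¹ for all A with some fixed invertible T, then n = 1. Equivalently, for n ≥ 2 the transpose-type form is impossible: there exist A, B with AB = 0 and BA ≠ 0, so eigv(φ(A)φ(B)) = eigv(AB) fails for the anti-homomorphic form. -/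
/-!
A 2-local automorphism sends a pair with `A * B = 0` to a pair with product `0`, since on that
pair it agrees with an automorphism. The map `A ↦ T * Aᵀ * T⁻¹` reverses products, sending it to
a conjugate of `(B * A)ᵀ`. For `n ≥ 2` the matrix units `A = E₁₁`, `B = E₀₁` have `A * B = 0` but
`B * A = E₀₁ ≠ 0`.
-/

open Matrix

lemma mul_eq_zero_of_forall_exists_algEquiv {F R : Type*} [CommSemiring F] [Semiring R]
    [Algebra F R] {φ : R → R} (h2loc : ∀ a b : R, ∃ ψ : R ≃ₐ[F] R, φ a = ψ a ∧ φ b = ψ b)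
    {a b : R} (hab : a * b = 0) : φ a * φ b = 0 := by
  obtain ⟨ψ, hψa, hψb⟩ := h2loc a b
  rw [hψa, hψb, ← map_mul, hab, map_zero]

namespace Matrix

variable {ι R : Type*} [Fintype ι] [DecidableEq ι] [CommRing R]

lemma conj_transpose_mul_conj_transpose {T : Matrix ι ι R} (hT : IsUnit T) (A B : Matrix ι ι R) :
    (T * Aᵀ * T⁻¹) * (T * Bᵀ * T⁻¹) = T * (B * A)ᵀ * T⁻¹ := by
  have hdet : IsUnit T.det := (isUnit_iff_isUnit_det T).mp hT
  simp only [transpose_mul, Matrix.mul_assoc, nonsing_inv_mul_cancel_left T _ hdet]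

lemma conj_eq_zero_iff {T : Matrix ι ι R} (hT : IsUnit T) {M : Matrix ι ι R} :
    T * M * T⁻¹ = 0 ↔ M = 0 := by
  have hdet : IsUnit T.det := (isUnit_iff_isUnit_det T).mp hT
  refine ⟨fun h => ?_, fun h => by rw [h, Matrix.mul_zero, Matrix.zero_mul]⟩
  calc M = T⁻¹ * (T * M * T⁻¹) * T := by
        simp only [Matrix.mul_assoc, nonsing_inv_mul T hdet, Matrix.mul_one,
          nonsing_inv_mul_cancel_left T _ hdet]
    _ = 0 := by rw [h, Matrix.mul_zero, Matrix.zero_mul]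

lemma exists_mul_eq_zero_mul_ne_zero [Nontrivial R] {i j : ι} (hij : i ≠ j) :
    ∃ A B : Matrix ι ι R, A * B = 0 ∧ B * A ≠ 0 := by
  refine ⟨single j j 1, single i j 1, single_mul_single_of_ne 1 j j i hij.symm 1, ?_⟩
  rw [single_mul_single_same, mul_one]
  exact fun h => one_ne_zero (by simpa using congr_fun (congr_fun h i) j : (1 : R) = 0)

end Matrix

theorem stmt_10 {F : Type*} [Field F] (n : ℕ) (hn : 0 < n)
    (φ : Matrix (Fin n) (Fin n) F → Matrix (Fin n) (Fin n) F)
    (h2loc : ∀ A B : Matrix (Fin n) (Fin n) F,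
      ∃ ψ : Matrix (Fin n) (Fin n) F ≃ₐ[F] Matrix (Fin n) (Fin n) F,
        φ A = ψ A ∧ φ B = ψ B)
    (T : Matrix (Fin n) (Fin n) F) (hT : IsUnit T)
    (hform : ∀ A : Matrix (Fin n) (Fin n) F, φ A = T * A.transpose * T⁻¹) :
    n = 1 := by
  by_contra hne
  have h01 : (⟨0, hn⟩ : Fin n) ≠ ⟨1, by omega⟩ := by simp [Fin.ext_iff]
  obtain ⟨A, B, hAB, hBA⟩ := exists_mul_eq_zero_mul_ne_zero (R := F) h01
  have hφ := mul_eq_zero_of_forall_exists_algEquiv h2loc hAB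
  rw [hform, hform, conj_transpose_mul_conj_transpose hT, conj_eq_zero_iff hT,
    transpose_eq_zero] at hφ
  exact hBA hφ
end

section
/- Let X be a Banach space, ψ : F(X) → B(X) a nonzero algebra homomorphism on the finite rank operators, and define T : X → X by Tx = ψ(x ⊗ f₀) y₀, where y₀ ∈ X and f₀ ∈ X' are chosen so that ψ(x ⊗ f₀) y₀ ≠ 0 for some x. Then T is an injective linear operator satisfying T A = ψ(A) T for all A ∈ F(X). -/
/-!
Since `x ↦ f₀.smulRight x` is linear and `f₀.smulRight (A x) = A ∘L f₀.smulRight x`, applying the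
homomorphism `ψ` and evaluating at `y₀` gives a linear map `T` with `T ∘ A = ψ A ∘ T`. If `T x = 0`
with `x ≠ 0`, choose `g` with `g x = 1`: then every `z = (g.smulRight z) x` satisfies
`T z = ψ (g.smulRight z) (T x) = 0`, so `T = 0`, contradicting the choice of `f₀` and `y₀`.
-/

/-- `A` is a finite rank (bounded) operator. -/
def FiniteRankOp {𝕜 X : Type*} [RCLike 𝕜] [NormedAddCommGroup X] [NormedSpace 𝕜 X]
    (A : X →L[𝕜] X) : Prop :=
  FiniteDimensional 𝕜 (LinearMap.range (A : X →ₗ[𝕜] X))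

section

variable {𝕜 X : Type*} [RCLike 𝕜] [NormedAddCommGroup X] [NormedSpace 𝕜 X]

lemma ContinuousLinearMap.comp_smulRight (A : X →L[𝕜] X) (f : X →L[𝕜] 𝕜) (x : X) :
    A ∘L f.smulRight x = f.smulRight (A x) := by
  ext
  simp

lemma FiniteRankOp.smulRight (f : X →L[𝕜] 𝕜) (x : X) : FiniteRankOp (f.smulRight x) := by
  have hle : LinearMap.range (f.smulRight x : X →ₗ[𝕜] X) ≤ Submodule.span 𝕜 {x} := by
    rintro _ ⟨z, rfl⟩
    exact Submodule.smul_mem _ _ (Submodule.mem_span_singleton_self x)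
  exact Submodule.finiteDimensional_of_le hle

def FiniteRankOp.rankOneMap (ψ : (X →L[𝕜] X) → (X →L[𝕜] X))
    (hadd : ∀ A B : X →L[𝕜] X, FiniteRankOp A → FiniteRankOp B → ψ (A + B) = ψ A + ψ B)
    (hsmul : ∀ (c : 𝕜) (A : X →L[𝕜] X), FiniteRankOp A → ψ (c • A) = c • ψ A)
    (f : X →L[𝕜] 𝕜) (y : X) : X →ₗ[𝕜] X where
  toFun x := ψ (f.smulRight x) y
  map_add' x x' := by
    have h : f.smulRight (x + x') = f.smulRight x + f.smulRight x' :=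
      map_add (f.smulRightₗ (T := 𝕜)) x x'
    simp only [h, hadd _ _ (smulRight f x) (smulRight f x'), add_apply]
  map_smul' c x := by
    have h : f.smulRight (c • x) = c • f.smulRight x := map_smul (f.smulRightₗ (T := 𝕜)) c x
    simp only [h, hsmul c _ (smulRight f x), smul_apply, RingHom.id_apply]

lemma FiniteRankOp.rankOneMap_intertwines {ψ : (X →L[𝕜] X) → (X →L[𝕜] X)}
    {hadd : ∀ A B : X →L[𝕜] X, FiniteRankOp A → FiniteRankOp B → ψ (A + B) = ψ A + ψ B}
    {hsmul : ∀ (c : 𝕜) (A : X →L[𝕜] X), FiniteRankOp A → ψ (c • A) = c • ψ A}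
    (hmul : ∀ A B : X →L[𝕜] X, FiniteRankOp A → FiniteRankOp B →
      ψ (A ∘L B) = ψ A ∘L ψ B)
    (f : X →L[𝕜] 𝕜) (y : X) {A : X →L[𝕜] X} (hA : FiniteRankOp A) (x : X) :
    rankOneMap ψ hadd hsmul f y (A x) = ψ A (rankOneMap ψ hadd hsmul f y x) := by
  change ψ (f.smulRight (A x)) y = ψ A (ψ (f.smulRight x) y)
  rw [← ContinuousLinearMap.comp_smulRight, hmul _ _ hA (smulRight f x)]
  rfl

lemma injective_of_intertwining_finiteRankOp {ψ : (X →L[𝕜] X) → (X →L[𝕜] X)} {T : X →ₗ[𝕜] X}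
    (hT : ∀ A : X →L[𝕜] X, FiniteRankOp A → ∀ x : X, T (A x) = ψ A (T x)) (hT0 : T ≠ 0) :
    Function.Injective T := by
  rw [injective_iff_map_eq_zero]
  intro x hx
  by_contra hx0
  obtain ⟨g, hg⟩ := SeparatingDual.exists_eq_one (R := 𝕜) hx0
  refine hT0 (LinearMap.ext fun z => ?_)
  have hz : g.smulRight z x = z := by simp [hg]
  rw [← hz, hT _ (FiniteRankOp.smulRight g z), hx, map_zero, LinearMap.zero_apply]

end

theorem stmt_12_general {𝕜 X : Type*} [RCLike 𝕜] [NormedAddCommGroup X] [NormedSpace 𝕜 X]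
    (ψ : (X →L[𝕜] X) → (X →L[𝕜] X))
    (hadd : ∀ A B : X →L[𝕜] X, FiniteRankOp A → FiniteRankOp B → ψ (A + B) = ψ A + ψ B)
    (hsmul : ∀ (c : 𝕜) (A : X →L[𝕜] X), FiniteRankOp A → ψ (c • A) = c • ψ A)
    (hmul : ∀ A B : X →L[𝕜] X, FiniteRankOp A → FiniteRankOp B →
      ψ (A ∘L B) = ψ A ∘L ψ B)
    (y₀ : X) (f₀ : X →L[𝕜] 𝕜)
    (hnz : ∃ x : X, ψ (f₀.smulRight x) y₀ ≠ 0) :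
    ∃ T : X →ₗ[𝕜] X,
      (∀ x : X, T x = ψ (f₀.smulRight x) y₀) ∧
      Function.Injective T ∧
      (∀ A : X →L[𝕜] X, FiniteRankOp A → ∀ x : X, T (A x) = ψ A (T x)) := by
  set T := FiniteRankOp.rankOneMap ψ hadd hsmul f₀ y₀
  have hT : ∀ A : X →L[𝕜] X, FiniteRankOp A → ∀ x : X, T (A x) = ψ A (T x) :=
    fun A hA => FiniteRankOp.rankOneMap_intertwines hmul f₀ y₀ hA
  have hT0 : T ≠ 0 := by
    obtain ⟨x, hx⟩ := hnz
    exact fun h => hx (LinearMap.congr_fun h x)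
  exact ⟨T, fun _ => rfl, injective_of_intertwining_finiteRankOp hT hT0, hT⟩

theorem stmt_12 {𝕜 X : Type*} [RCLike 𝕜] [NormedAddCommGroup X] [NormedSpace 𝕜 X]
    [CompleteSpace X]
    (ψ : (X →L[𝕜] X) → (X →L[𝕜] X))
    (hadd : ∀ A B : X →L[𝕜] X, FiniteRankOp A → FiniteRankOp B → ψ (A + B) = ψ A + ψ B)
    (hsmul : ∀ (c : 𝕜) (A : X →L[𝕜] X), FiniteRankOp A → ψ (c • A) = c • ψ A)
    (hmul : ∀ A B : X →L[𝕜] X, FiniteRankOp A → FiniteRankOp B →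
      ψ (A ∘L B) = ψ A ∘L ψ B)
    (y₀ : X) (f₀ : X →L[𝕜] 𝕜)
    (hnz : ∃ x : X, ψ (f₀.smulRight x) y₀ ≠ 0) :
    ∃ T : X →ₗ[𝕜] X,
      (∀ x : X, T x = ψ (f₀.smulRight x) y₀) ∧
      Function.Injective T ∧
      (∀ A : X →L[𝕜] X, FiniteRankOp A → ∀ x : X, T (A x) = ψ A (T x)) :=
  stmt_12_general ψ hadd hsmul hmul y₀ f₀ hnz
end

section
/- Let X be a Banach space and (Pₙ) a sequence of pairwise orthogonal rank-one idempotents in B(X) with sup ‖Pₙ‖ < ∞. Let λₙ = (1/3)ⁿ. If U ∈ B(X) is invertible withU (∑ₙ λₙ Pₙ) U⁻¹ = ∑ₙ λₙ Pₙ, then U Pₙ U⁻¹ = Pₙ for every n. -/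
/-!
Both `P` and its conjugate `Q n = U * P n * V` are families of orthogonal idempotents, and `hfix`
says they have the same weighted sum `T = ∑ λₙ Pₙ = ∑ λₙ Qₙ`, with distinct nonzero weights.
Evaluating `Pᵢ * T * Qₖ` through either representation gives `λᵢ PᵢQₖ = λₖ PᵢQₖ`, so `PᵢQₖ = 0`
for `i ≠ k`. Then `λₖ Pₖ = Pₖ T = λₖ PₖQₖ = T Qₖ = λₖ Qₖ`, hence `Pₖ = Qₖ`.
-/

open Function

section TopologicalAlgebra

variable {ι 𝕜 A : Type*} [Field 𝕜] [Ring A] [Algebra 𝕜 A] [TopologicalSpace A]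
  [IsTopologicalRing A] [T2Space A] {a : ι → 𝕜} {P Q : ι → A}

theorem mul_tsum_smul_of_mul_eq_zero (hQ : Summable fun i ↦ a i • Q i) (x : A) (k : ι)
    (hx : ∀ i ≠ k, x * Q i = 0) : x * ∑' i, a i • Q i = a k • (x * Q k) := by
  rw [← hQ.tsum_mul_left, tsum_eq_single k]
  · exact mul_smul_comm _ _ _
  · intro i hi
    rw [mul_smul_comm, hx i hi, smul_zero]

theorem tsum_smul_mul_of_mul_eq_zero (hQ : Summable fun i ↦ a i • Q i) (x : A) (k : ι)
    (hx : ∀ i ≠ k, Q i * x = 0) : (∑' i, a i • Q i) * x = a k • (Q k * x) := by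
  rw [← hQ.tsum_mul_right, tsum_eq_single k]
  · exact smul_mul_assoc _ _ _
  · intro i hi
    rw [smul_mul_assoc, hx i hi, smul_zero]

theorem OrthogonalIdempotents.mul_tsum_smul (hP : OrthogonalIdempotents P)
    (hPs : Summable fun i ↦ a i • P i) (k : ι) : P k * ∑' i, a i • P i = a k • P k := by
  rw [mul_tsum_smul_of_mul_eq_zero hPs _ k fun i hi ↦ hP.ortho hi.symm, (hP.idem k).eq]

theorem OrthogonalIdempotents.tsum_smul_mul (hP : OrthogonalIdempotents P)
    (hPs : Summable fun i ↦ a i • P i) (k : ι) : (∑' i, a i • P i) * P k = a k • P k := by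
  rw [tsum_smul_mul_of_mul_eq_zero hPs _ k fun i hi ↦ hP.ortho hi, (hP.idem k).eq]

theorem OrthogonalIdempotents.eq_of_tsum_smul_eq (hP : OrthogonalIdempotents P)
    (hQ : OrthogonalIdempotents Q) (ha : Injective a) (ha₀ : ∀ i, a i ≠ 0)
    (hPs : Summable fun i ↦ a i • P i) (hQs : Summable fun i ↦ a i • Q i)
    (hPQ : ∑' i, a i • P i = ∑' i, a i • Q i) : P = Q := by
  have cross : ∀ i k, i ≠ k → P i * Q k = 0 := by
    intro i k hik
    have : a i • (P i * Q k) = a k • (P i * Q k) := by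
      rw [← smul_mul_assoc, ← hP.mul_tsum_smul hPs, mul_assoc, hPQ, hQ.tsum_smul_mul hQs,
        mul_smul_comm]
    by_contra hne
    exact hik (ha (smul_left_injective 𝕜 hne this))
  funext k
  have hPk : a k • P k = a k • (P k * Q k) := by
    rw [← hP.mul_tsum_smul hPs, hPQ,
      mul_tsum_smul_of_mul_eq_zero hQs _ k fun i hi ↦ cross k i hi.symm]
  have hQk : a k • Q k = a k • (P k * Q k) := by
    rw [← hQ.tsum_smul_mul hQs, ← hPQ,
      tsum_smul_mul_of_mul_eq_zero hPs _ k fun i hi ↦ cross i k hi]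
  exact smul_right_injective A (ha₀ k) (hPk.trans hQk.symm)

end TopologicalAlgebra

theorem OrthogonalIdempotents.conj {ι R : Type*} [Ring R] {P : ι → R}
    (hP : OrthogonalIdempotents P) {U V : R} (hVU : V * U = 1) :
    OrthogonalIdempotents fun i ↦ U * P i * V := by
  have hmul : ∀ x y : R, U * x * V * (U * y * V) = U * (x * y) * V := fun x y ↦ by
    rw [show U * x * V * (U * y * V) = U * x * (V * U) * y * V by noncomm_ring, hVU, mul_one,
      mul_assoc U x]
  refine ⟨fun i ↦ ?_, fun i j hij ↦ ?_⟩
  · rw [IsIdempotentElem, hmul, (hP.idem i).eq]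
  · simp only [hmul, hP.ortho hij, mul_zero, zero_mul]

theorem summable_smul_of_norm_le {ι 𝕜 E : Type*} [NormedField 𝕜] [NormedAddCommGroup E]
    [NormedSpace 𝕜 E] [CompleteSpace E] {a : ι → 𝕜} {f : ι → E} {C : ℝ}
    (ha : Summable fun i ↦ ‖a i‖) (hf : ∀ i, ‖f i‖ ≤ C) : Summable fun i ↦ a i • f i :=
  .of_norm_bounded (ha.mul_right C) fun i ↦
    (norm_smul_le _ _).trans (mul_le_mul_of_nonneg_left (hf i) (norm_nonneg _))

theorem pow_right_injective_of_norm_ne_one {𝕜 : Type*} [NormedDivisionRing 𝕜] {c : 𝕜}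
    (h₀ : c ≠ 0) (h₁ : ‖c‖ ≠ 1) : Injective fun n : ℕ ↦ c ^ n :=
  .of_comp (f := norm) <| by
    simpa only [comp_def, norm_pow] using pow_right_injective₀ (norm_pos_iff.mpr h₀) h₁

theorem stmt_13_general {𝕜 X : Type*} [RCLike 𝕜] [NormedAddCommGroup X] [NormedSpace 𝕜 X]
    [CompleteSpace X]
    (P : ℕ → (X →L[𝕜] X))
    (hidem : ∀ n, P n * P n = P n)
    (horth : ∀ m n, m ≠ n → P m * P n = 0)
    (hbdd : ∃ C : ℝ, ∀ n, ‖P n‖ ≤ C)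
    (U V : X →L[𝕜] X) (hVU : V * U = 1)
    (hfix : U * (∑' n : ℕ, ((1/3 : 𝕜) ^ n) • P n) * V = ∑' n : ℕ, ((1/3 : 𝕜) ^ n) • P n) :
    ∀ n, U * P n * V = P n := by
  obtain ⟨C, hC⟩ := hbdd
  have hP : OrthogonalIdempotents P := ⟨hidem, horth⟩
  have hnorm : ‖(1/3 : 𝕜)‖ = 1/3 := by norm_num [RCLike.norm_ofNat]
  have hPs : Summable fun n ↦ (1/3 : 𝕜) ^ n • P n :=
    summable_smul_of_norm_le (summable_norm_geometric_of_norm_lt_one (by norm_num [hnorm])) hC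
  have hconj : HasSum (fun n ↦ (1/3 : 𝕜) ^ n • (U * P n * V))
      (U * (∑' n, (1/3 : 𝕜) ^ n • P n) * V) := by
    simpa only [smul_mul_assoc, mul_smul_comm, ← mul_assoc] using
      (hPs.hasSum.mul_right V).mul_left U
  exact congrFun <| (hP.conj hVU).eq_of_tsum_smul_eq hP
    (pow_right_injective_of_norm_ne_one (by norm_num) (by norm_num [hnorm]))
    (fun n ↦ by norm_num) hconj.summable hPs (by rw [hconj.tsum_eq, hfix])

theorem stmt_13 {𝕜 X : Type*} [RCLike 𝕜] [NormedAddCommGroup X] [NormedSpace 𝕜 X]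
    [CompleteSpace X]
    (P : ℕ → (X →L[𝕜] X))
    (hidem : ∀ n, P n * P n = P n)
    (horth : ∀ m n, m ≠ n → P m * P n = 0)
    (hrank : ∀ n, Module.finrank 𝕜 (LinearMap.range ((P n : X →L[𝕜] X) : X →ₗ[𝕜] X)) = 1)
    (hbdd : ∃ C : ℝ, ∀ n, ‖P n‖ ≤ C)
    (U V : X →L[𝕜] X) (hUV : U * V = 1) (hVU : V * U = 1)
    (hfix : U * (∑' n : ℕ, ((1/3 : 𝕜) ^ n) • P n) * V = ∑' n : ℕ, ((1/3 : 𝕜) ^ n) • P n) :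
    ∀ n, U * P n * V = P n :=
  stmt_13_general P hidem horth hbdd U V hVU hfix
end

section
/- Let Q₁, Q₂, … and P₁, P₂, … be two sequences of pairwise orthogonal bounded idempotents on a Banach space X, uniformly bounded in norm, and let λₙ = (1/3)ⁿ. If ∑ₙ λₙ Qₙ = ∑ₙ λₙ Pₙ (norm convergent series), then Qₙ = Pₙ for all n. -/
/-!
Let `S` be the common sum. Orthogonality and idempotency give `Qₙ S = λₙ Qₙ` and `S Pₙ = λₙ Pₙ`,
so computing `Qₘ S Pₙ` in two ways gives `λₘ Qₘ Pₙ = λₙ Qₘ Pₙ`, whence `Qₘ Pₙ = 0` for `m ≠ n`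
because the weights are distinct. Expanding `Qₙ S` along the `P`-series and `S Pₙ` along the
`Q`-series now gives `Qₙ = Qₙ Pₙ = Pₙ`. Only the summability of the series is analytic input.
-/

open Function

section OrthogonalIdempotents

variable {𝕜 A ι : Type*} [Field 𝕜] [Ring A] [Algebra 𝕜 A] [TopologicalSpace A]
  [IsTopologicalRing A] [T2Space A]

theorem mul_tsum_smul_of_mul_eq_zero_s14 {c : ι → 𝕜} {E : ι → A} (hs : Summable fun m => c m • E m)
    {B : A} {n : ι} (hB : ∀ m, m ≠ n → B * E m = 0) :
    B * ∑' m, c m • E m = c n • (B * E n) := by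
  rw [← hs.tsum_mul_left]
  simp_rw [mul_smul_comm]
  exact tsum_eq_single n fun m hm => by rw [hB m hm, smul_zero]

theorem tsum_smul_mul_of_mul_eq_zero_s14 {c : ι → 𝕜} {E : ι → A} (hs : Summable fun m => c m • E m)
    {B : A} {n : ι} (hB : ∀ m, m ≠ n → E m * B = 0) :
    (∑' m, c m • E m) * B = c n • (E n * B) := by
  rw [← hs.tsum_mul_right]
  simp_rw [smul_mul_assoc]
  exact tsum_eq_single n fun m hm => by rw [hB m hm, smul_zero]

theorem eq_of_tsum_smul_eq_tsum_smul {c : ι → 𝕜} (hc : Injective c) (hc0 : ∀ n, c n ≠ 0)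
    {P Q : ι → A} (hPidem : ∀ n, IsIdempotentElem (P n)) (hQidem : ∀ n, IsIdempotentElem (Q n))
    (hPorth : Pairwise fun m n => P m * P n = 0) (hQorth : Pairwise fun m n => Q m * Q n = 0)
    (hPs : Summable fun n => c n • P n) (hQs : Summable fun n => c n • Q n)
    (heq : ∑' n, c n • Q n = ∑' n, c n • P n) (n : ι) :
    Q n = P n := by
  set S := ∑' n, c n • P n
  have hQS : ∀ n, Q n * S = c n • Q n := fun n => by
    rw [← heq, mul_tsum_smul_of_mul_eq_zero_s14 hQs fun m hm => hQorth hm.symm, hQidem n]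
  have hSP : ∀ n, S * P n = c n • P n := fun n => by
    rw [tsum_smul_mul_of_mul_eq_zero_s14 hPs fun m hm => hPorth hm, hPidem n]
  have hQP : ∀ m n, m ≠ n → Q m * P n = 0 := fun m n hmn => by
    have h : c m • (Q m * P n) = c n • (Q m * P n) := by
      rw [← smul_mul_assoc, ← hQS, mul_assoc, hSP, mul_smul_comm]
    have h0 : (c m - c n) • (Q m * P n) = 0 := by rw [sub_smul, h, sub_self]
    exact (smul_eq_zero.1 h0).resolve_left (sub_ne_zero.2 (hc.ne hmn))
  have hQ : c n • Q n = c n • (Q n * P n) := by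
    rw [← hQS, mul_tsum_smul_of_mul_eq_zero_s14 hPs fun m hm => hQP n m hm.symm]
  have hP : c n • P n = c n • (Q n * P n) := by
    rw [← hSP, ← heq, tsum_smul_mul_of_mul_eq_zero_s14 hQs fun m hm => hQP m n hm]
  exact (smul_right_injective A (hc0 n) hQ).trans (smul_right_injective A (hc0 n) hP).symm

end OrthogonalIdempotents

theorem summable_pow_smul_of_norm_le {𝕜 E : Type*} [NormedField 𝕜] [NormedAddCommGroup E]
    [NormedSpace 𝕜 E] [CompleteSpace E] {c : 𝕜} (hc : ‖c‖ < 1) {f : ℕ → E} {C : ℝ}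
    (hf : ∀ n, ‖f n‖ ≤ C) : Summable fun n => c ^ n • f n := by
  refine .of_norm_bounded ((summable_geometric_of_lt_one (norm_nonneg c) hc).mul_right C)
    fun n => ?_
  rw [norm_smul, norm_pow]
  exact mul_le_mul_of_nonneg_left (hf n) (by positivity)

theorem stmt_14 {𝕜 X : Type*} [RCLike 𝕜] [NormedAddCommGroup X] [NormedSpace 𝕜 X]
    [CompleteSpace X]
    (P Q : ℕ → (X →L[𝕜] X))
    (hPidem : ∀ n, P n * P n = P n) (hQidem : ∀ n, Q n * Q n = Q n)
    (hPorth : ∀ m n, m ≠ n → P m * P n = 0)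
    (hQorth : ∀ m n, m ≠ n → Q m * Q n = 0)
    (hbdd : ∃ C : ℝ, (∀ n, ‖P n‖ ≤ C) ∧ (∀ n, ‖Q n‖ ≤ C))
    (heq : (∑' n : ℕ, ((1/3 : 𝕜) ^ n) • Q n) = ∑' n : ℕ, ((1/3 : 𝕜) ^ n) • P n) :
    ∀ n, Q n = P n := by
  obtain ⟨C, hP, hQ⟩ := hbdd
  have hnorm : ‖(1/3 : 𝕜)‖ < 1 := by norm_num
  have hinj : Injective fun n : ℕ => (1/3 : 𝕜) ^ n := fun m n h => by
    simpa using congrArg norm h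
  exact eq_of_tsum_smul_eq_tsum_smul hinj (fun n => by simp) hPidem hQidem
    (fun m n => hPorth m n) (fun m n => hQorth m n) (summable_pow_smul_of_norm_le hnorm hP)
    (summable_pow_smul_of_norm_le hnorm hQ) heq
end
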